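/- Let e be a positive integer and let (x, y, z, w) be a solution in positive integers of (4^e−1)^x + 4^{e·y} + (4^e+1)^z = (4^e+2)^w such that (e, x, y, z, w) ≠ (1, 3, 1, 1, 2) and (e, x, y, z, w) ≠ (1, 3, 3, 3, 3). Then w ≥ 4e. -/

import Mathlib

/-!
Reducing modulo 3, 4 and 4^e + 1 shows that z, x and y are odd, and comparing sizes shows that
w < 4e forces x + z < 4^e once e ≥ 2 (for e = 1 only finitely many cases remain).

The rest is 2-adic. With N = 4^e, the binomial theorem gives
(N - 1)^x + (N + 1)^z ≡ (x + z) N + (C(z,2) - C(x,2)) N² (mod N³), while the right-hand side is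
2^w (1 + N/2)^w with (1 + N/2)^w odd and ≡ 1 + wN/2 (mod N²/4). If y = 1, the left-hand side is N
times an odd number, so w = 2e, and then N ∣ x + z, contradicting 0 < x + z < N. If y ≥ 3, write
x + z = 2^a u with u odd: now w = 2e + a, the bound x + z < N forces u = 1, and the coefficient
of N² has the wrong parity.
-/

/-- The equation with `M` in place of `4 ^ e`, over `ℤ` so that `M - 1` is not truncated. -/
def IsSolution (M : ℤ) (x y z w : ℕ) : Prop :=
  (M - 1) ^ x + M ^ y + (M + 1) ^ z = (M + 2) ^ w

theorem cube_dvd_one_add_pow_sub {R : Type*} [CommRing R] (a : R) (k : ℕ) :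
    a ^ 3 ∣ (1 + a) ^ k - 1 - k * a - k.choose 2 * a ^ 2 := by
  induction k with
  | zero => simp
  | succ k ih =>
    convert (ih.mul_left (1 + a)).add (dvd_mul_right (a ^ 3) (k.choose 2 : R)) using 1
    push_cast [Nat.choose_succ_succ', Nat.choose_one_right]
    ring

theorem cube_dvd_sub_one_pow_add_add_one_pow_sub {R : Type*} [CommRing R] (a : R) {x : ℕ}
    (hx : Odd x) (z : ℕ) :
    a ^ 3 ∣ (a - 1) ^ x + (a + 1) ^ z - (x + z) * a - (z.choose 2 - x.choose 2) * a ^ 2 := by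
  have hneg : a ^ 3 ∣ (1 + -a) ^ x - 1 - x * -a - x.choose 2 * (-a) ^ 2 := by
    simpa [Odd.neg_pow (by decide : Odd 3)] using cube_dvd_one_add_pow_sub (-a) x
  convert (dvd_neg.mpr hneg).add (cube_dvd_one_add_pow_sub a z) using 1
  rw [show a - 1 = -(1 + -a) by ring, hx.neg_pow]
  ring

theorem cast_choose_two_mul_two (n : ℕ) : (n.choose 2 : ℤ) * 2 = n * (n - 1) := by
  induction n with
  | zero => simp
  | succ n ih =>
    push_cast [Nat.choose_succ_succ', Nat.choose_one_right]
    linear_combination ih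

theorem two_pow_mul_odd_inj {i j : ℕ} {A B : ℤ} (hA : Odd A) (hB : Odd B)
    (h : 2 ^ i * A = 2 ^ j * B) : i = j ∧ A = B := by
  have key : ∀ {i j : ℕ} {A B : ℤ}, Odd A → i ≤ j → 2 ^ i * A = 2 ^ j * B → i = j := by
    intro i j A B hA hij h
    obtain ⟨k, rfl⟩ := Nat.exists_eq_add_of_le hij
    rw [pow_add, mul_assoc, mul_right_inj' (by positivity)] at h
    subst h
    simpa [Int.even_pow, ← Int.not_even_iff_odd] using (Int.odd_mul.mp hA).1
  have hij : i = j := by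
    rcases le_total i j with hij | hij
    exacts [key hA hij h, (key hB hij h.symm).symm]
  subst hij
  exact ⟨rfl, mul_left_cancel₀ (by positivity) h⟩

theorem eq_one_and_dvd_of_add_two_pow_mul_eq {u K : ℤ} {n c w : ℕ} (hu0 : 0 < u)
    (hu : u < 2 ^ n) (h : u + 2 ^ n * K = (1 + 2 ^ (c + n)) ^ w) :
    u = 1 ∧ 2 ^ (n + 2 * c) ∣ K - w * 2 ^ c := by
  obtain ⟨v, hv⟩ := sq_dvd_add_pow_sub_sub (2 ^ (c + n) : ℤ) 1 w
  simp only [one_pow, one_mul] at hv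
  have hu1 : u - 1 = 2 ^ n * (w * 2 ^ c + 2 ^ (n + 2 * c) * v - K) := by
    linear_combination h + hv
  have hu1' : u - 1 = 0 :=
    Int.eq_zero_of_dvd_of_nonneg_of_lt (by omega) (by omega) (Dvd.intro _ hu1.symm)
  refine ⟨by omega, v, ?_⟩
  have : (2 : ℤ) ^ n * (K - w * 2 ^ c - 2 ^ (n + 2 * c) * v) = 0 := by
    linear_combination hu1 - hu1'
  linear_combination (mul_eq_zero.mp this).resolve_left (by positivity)

/-- The final parity clash for `y ≥ 3`, where `2 * c + n + 2` will be the exponent `w`. -/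
theorem not_two_dvd_choose_two_sub_choose_two_sub {x z c n : ℕ} (hx : Odd x)
    (hcn : Odd (c + n)) (hxz : x + z = 2 ^ (c + 1)) :
    ¬ 2 ∣ (z.choose 2 : ℤ) - x.choose 2 - (2 * c + n + 2 : ℕ) * 2 ^ c := by
  have hz : (z : ℤ) = 2 ^ (c + 1) - x := by
    rw [eq_sub_iff_add_eq, add_comm]; exact_mod_cast hxz
  have hD : (z.choose 2 : ℤ) - x.choose 2 = (2 ^ c - x) * (2 ^ (c + 1) - 1) := by
    refine mul_right_cancel₀ (two_ne_zero (α := ℤ)) ?_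
    linear_combination cast_choose_two_mul_two z - cast_choose_two_mul_two x +
      (z + 2 ^ (c + 1) - x - 1 : ℤ) * hz
  rw [hD, ← even_iff_two_dvd]
  rcases c with _ | c
  · obtain rfl : x = 1 := by obtain ⟨k, rfl⟩ := hx; simp at hxz; omega
    simp only [zero_add] at hcn
    simp [parity_simps, hcn]
  · simp [parity_simps, pow_succ, hx]

theorem mul_lt_mul_of_pow_lt_pow_of_pow_le_pow {R : Type*} [CommSemiring R] [LinearOrder R]
    [IsStrictOrderedRing R] {a b : R} {p q x w : ℕ} (ha : 1 < a) (hb : 0 ≤ b) (hp : p ≠ 0)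
    (hab : b ^ p ≤ a ^ q) (h : a ^ x < b ^ w) : p * x < q * w := by
  rw [← pow_lt_pow_iff_right₀ ha]
  calc a ^ (p * x) = (a ^ x) ^ p := by rw [mul_comm, pow_mul]
  _ < (b ^ w) ^ p := pow_lt_pow_left₀ h (by positivity) hp
  _ = (b ^ p) ^ w := by rw [← pow_mul, ← pow_mul, mul_comm]
  _ ≤ (a ^ q) ^ w := pow_le_pow_left₀ (by positivity) hab w
  _ = a ^ (q * w) := by rw [pow_mul]

theorem add_three_pow_eight_le_pow_nine {a : ℤ} (ha : 15 ≤ a) : (a + 3) ^ 8 ≤ a ^ 9 := by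
  obtain ⟨t, rfl⟩ : ∃ t : ℤ, a = t + 15 := ⟨a - 15, by ring⟩
  have ht : 0 ≤ t := by linarith
  rw [← sub_nonneg]
  ring_nf
  positivity

theorem nine_mul_le_four_pow_add_two {e : ℕ} (he : 2 ≤ e) : 9 * e ≤ 4 ^ e + 2 := by
  induction e, he using Nat.le_induction with
  | base => norm_num
  | succ e _ ih => rw [pow_succ]; omega

namespace IsSolution

variable {M : ℤ} {x y z w : ℕ}

theorem odd_z (h : IsSolution M x y z w) (hM : M ≡ 1 [ZMOD 3]) (hx : x ≠ 0) (hw : w ≠ 0) :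
    Odd z := by
  have h3 := congrArg (Int.cast : ℤ → ZMod 3) h
  push_cast at h3
  rw [(ZMod.intCast_eq_intCast_iff' _ _ _).mpr hM] at h3
  rw [Int.cast_one, sub_self, zero_pow hx, one_pow, show (1 + 2 : ZMod 3) = 0 by decide,
    zero_pow hw, show (1 + 1 : ZMod 3) = -1 by decide] at h3
  by_contra hz
  rw [Nat.not_odd_iff_even.mp hz |>.neg_one_pow] at h3
  exact absurd h3 (by decide)

theorem odd_x (h : IsSolution M x y z w) (hM : 4 ∣ M) (hy : y ≠ 0) (hw : 2 ≤ w) :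
    Odd x := by
  have h4 := congrArg (Int.cast : ℤ → ZMod 4) h
  push_cast at h4
  rw [(ZMod.intCast_zmod_eq_zero_iff_dvd _ _).mpr hM] at h4
  obtain ⟨k, rfl⟩ := Nat.exists_eq_add_of_le hw
  rw [zero_pow hy, zero_add, zero_sub, one_pow, zero_add, pow_add,
    show (2 : ZMod 4) ^ 2 = 0 by decide, zero_mul] at h4
  by_contra hx
  rw [Nat.not_odd_iff_even.mp hx |>.neg_one_pow] at h4
  exact absurd h4 (by decide)

theorem odd_y (h : IsSolution M x y z w) (hM : 0 < M) (hMe : Even M) (hx : Odd x)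
    (hz : z ≠ 0) : Odd y := by
  have hM1 : M ≡ -1 [ZMOD M + 1] := Int.modEq_iff_dvd.mpr ⟨-1, by ring⟩
  have hl : (M - 1) ^ x + M ^ y + (M + 1) ^ z ≡ (-1 - 1) ^ x + (-1) ^ y + (-1 + 1) ^ z
      [ZMOD M + 1] := by gcongr
  have hr : (M + 2) ^ w ≡ (-1 + 2) ^ w [ZMOD M + 1] := by gcongr
  by_contra hy
  rw [h, show (-1 - 1 : ℤ) = -2 by norm_num, hx.neg_pow,
    (Nat.not_odd_iff_even.mp hy).neg_one_pow, neg_add_cancel, zero_pow hz, add_zero] at hl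
  norm_num at hr
  have hdvd : M + 1 ∣ 2 ^ x := by simpa using Int.modEq_iff_dvd.mp (hl.symm.trans hr)
  have hcop : IsCoprime (M + 1) (2 ^ x) :=
    ((Int.prime_two.coprime_iff_not_dvd.mpr (even_iff_two_dvd.not.mp
      (Int.not_even_iff_odd.mpr hMe.add_one))).symm).pow_right
  have := Int.isUnit_iff.mp (hcop.isUnit_of_dvd' dvd_rfl hdvd)
  omega

theorem two_le_w (h : IsSolution M x y z w) (hM : 2 ≤ M) (hx : x ≠ 0) (hy : y ≠ 0)
    (hz : z ≠ 0) : 2 ≤ w := by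
  by_contra! hw
  have h1 := le_self_pow₀ (by linarith : (1 : ℤ) ≤ M - 1) hx
  have h2 := le_self_pow₀ (by linarith : (1 : ℤ) ≤ M) hy
  have h3 := le_self_pow₀ (by linarith : (1 : ℤ) ≤ M + 1) hz
  have h4 := pow_le_pow_right₀ (by linarith : (1 : ℤ) ≤ M + 2) (Nat.le_of_lt_succ hw)
  rw [pow_one] at h4
  unfold IsSolution at h
  linarith

/-- The ratio `9 / 8` is just fine enough to give `x + z < 4 ^ e` already for `e = 2`. -/
theorem eight_mul_lt (h : IsSolution M x y z w) (hM : 16 ≤ M) :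
    8 * x < 9 * w ∧ 8 * z < 9 * w := by
  have hM1 : 0 < M - 1 := by linarith
  have := pow_pos hM1 x
  have := pow_pos (by linarith : 0 < M) y
  have := pow_pos (by linarith : 0 < M + 1) z
  have hb : (M + 2) ^ 8 ≤ (M - 1) ^ 9 := by
    simpa [show M - 1 + 3 = M + 2 by ring] using
      add_three_pow_eight_le_pow_nine (a := M - 1) (by linarith)
  unfold IsSolution at h
  exact ⟨mul_lt_mul_of_pow_lt_pow_of_pow_le_pow (a := M - 1) (by linarith) (by linarith)
      (by norm_num) hb (by linarith),
    mul_lt_mul_of_pow_lt_pow_of_pow_le_pow (a := M + 1) (by linarith) (by linarith)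
      (by norm_num) (hb.trans (pow_le_pow_left₀ hM1.le (by linarith) 9)) (by linarith)⟩

theorem eq_of_w_lt_four (h : IsSolution 4 x y z w) (hx : 0 < x) (hy : 0 < y) (hz : 0 < z)
    (hw : w < 4) : (x, y, z, w) = (3, 1, 1, 2) ∨ (x, y, z, w) = (3, 3, 3, 3) := by
  have h' : 3 ^ x + 4 ^ y + 5 ^ z = 6 ^ w := by
    unfold IsSolution at h
    norm_num at h
    exact_mod_cast h
  have h6 : 6 ^ w ≤ 6 ^ 3 := pow_le_pow_right₀ (by norm_num) (by omega)
  have := pow_pos (by norm_num : 0 < 3) x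
  have := pow_pos (by norm_num : 0 < 4) y
  have := pow_pos (by norm_num : 0 < 5) z
  obtain ⟨hx', hy', hz'⟩ : x < 5 ∧ y < 4 ∧ z < 4 :=
    ⟨(pow_lt_pow_iff_right₀ (by norm_num : 1 < 3)).mp (by linarith),
      (pow_lt_pow_iff_right₀ (by norm_num : 1 < 4)).mp (by linarith),
      (pow_lt_pow_iff_right₀ (by norm_num : 1 < 5)).mp (by linarith)⟩
  interval_cases w <;> interval_cases x <;> interval_cases y <;> interval_cases z <;> simp_all

theorem exists_expansion (h : IsSolution M x y z w) (hx : Odd x) :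
    ∃ t : ℤ, (x + z) * M + M ^ y + (z.choose 2 - x.choose 2 + M * t) * M ^ 2 = (M + 2) ^ w := by
  obtain ⟨t, ht⟩ := cube_dvd_sub_one_pow_add_add_one_pow_sub M hx z
  exact ⟨t, by rw [← h]; linear_combination -ht⟩

end IsSolution

theorem not_isSolution_of_y_eq_one {m x z w : ℕ} (hm : Odd m) (hx : Odd x) (hz : Odd z)
    (hs : x + z < 2 ^ (m + 1)) : ¬ IsSolution (2 ^ (m + 1)) x 1 z w := by
  intro h
  obtain ⟨t, ht⟩ := h.exists_expansion hx
  set K : ℤ := z.choose 2 - x.choose 2 + 2 ^ (m + 1) * t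
  have hodd : Odd ((x + z + 1 : ℤ) + 2 ^ (m + 1) * K) := by
    have : Even ((x + z : ℕ) : ℤ) := (Int.even_coe_nat _).mpr (hx.add_odd hz)
    push_cast at this
    exact this.add_one.add_even ((even_two.pow_of_ne_zero m.succ_ne_zero).mul_right K)
  have hodd' : Odd ((1 + 2 ^ m : ℤ) ^ w) :=
    ((even_two.pow_of_ne_zero hm.pos.ne').one_add).pow
  obtain ⟨rfl, hO⟩ := two_pow_mul_odd_inj (i := m + 1) hodd hodd' (by
    rw [← mul_pow, show (2 : ℤ) * (1 + 2 ^ m) = 2 ^ (m + 1) + 2 by ring, ← ht]; ring)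
  obtain ⟨v, hv⟩ := sq_dvd_add_pow_sub_sub (2 ^ m : ℤ) 1 (m + 1)
  simp only [one_pow, one_mul] at hv
  -- `m + 1 = 2 (j + 1)`, so `w * 2 ^ m` is a multiple of `2 ^ (m + 1)`.
  obtain ⟨j, rfl⟩ := hm
  have hdvd : (2 : ℤ) ^ (2 * j + 1 + 1) ∣ x + z :=
    ⟨j + 1 + 2 ^ (2 * j) * v - K, by push_cast at hv; linear_combination hO + hv⟩
  have hs' : ((x + z : ℕ) : ℤ) < 2 ^ (2 * j + 1 + 1) := by exact_mod_cast hs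
  push_cast at hs'
  linarith [Int.le_of_dvd (by linarith [hx.pos, hz.pos]) hdvd]

theorem not_isSolution_of_three_le_y {m x y z w : ℕ} (hm : Odd m) (hx : Odd x) (hz : Odd z)
    (hy : 3 ≤ y) (hs : x + z < 2 ^ (m + 1)) : ¬ IsSolution (2 ^ (m + 1)) x y z w := by
  intro h
  obtain ⟨t, ht⟩ := h.exists_expansion hx
  obtain ⟨y, rfl⟩ := Nat.exists_eq_add_of_le hy
  obtain ⟨a, u, hu, hxz⟩ :=
    Nat.exists_eq_two_pow_mul_odd (n := x + z) (by have := hx.pos; omega)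
  obtain ⟨c, rfl⟩ : ∃ c, a = c + 1 := Nat.exists_eq_succ_of_ne_zero <| by
    rintro rfl
    rw [pow_zero, one_mul] at hxz
    exact Nat.not_even_iff_odd.mpr hu (hxz ▸ hx.add_odd hz)
  have hcm : c < m := by
    rw [← Nat.add_lt_add_iff_right (k := 1), ← Nat.pow_lt_pow_iff_right (by norm_num : 1 < 2)]
    exact lt_of_le_of_lt (Nat.le_mul_of_pos_right _ hu.pos) (hxz ▸ hs)
  obtain ⟨n, rfl⟩ := Nat.exists_eq_add_of_le hcm.le
  have hn : n ≠ 0 := by omega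
  have hun : u < 2 ^ n := by
    rw [hxz, show c + n + 1 = c + 1 + n by ring, pow_add 2 (c + 1) n] at hs
    exact Nat.lt_of_mul_lt_mul_left hs
  -- Now `x + z = 2 ^ (c + 1) * u` and `m = c + n`; the left-hand side is
  -- `2 ^ (2 * c + n + 2) * (u + 2 ^ n * K)`.
  set M : ℤ := 2 ^ (c + n + 1)
  set K : ℤ := z.choose 2 - x.choose 2 + M * (t + M ^ y) with hK
  have hodd : Odd ((u : ℤ) + 2 ^ n * K) :=
    ((Int.odd_coe_nat u).mpr hu).add_even ((even_two.pow_of_ne_zero hn).mul_right K)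
  have hodd' : Odd ((1 + 2 ^ (c + n) : ℤ) ^ w) :=
    ((even_two.pow_of_ne_zero (by omega)).one_add).pow
  have hxz' : (x + z : ℤ) = 2 ^ (c + 1) * u := by exact_mod_cast hxz
  obtain ⟨rfl, hO⟩ := two_pow_mul_odd_inj (i := 2 * c + n + 2) hodd hodd' (by
    rw [← mul_pow, show (2 : ℤ) * (1 + 2 ^ (c + n)) = M + 2 by ring, ← ht, hxz']; ring)
  obtain ⟨hu1, hdvd⟩ :=
    eq_one_and_dvd_of_add_two_pow_mul_eq (by exact_mod_cast hu.pos) (by exact_mod_cast hun) hO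
  have hu1 : u = 1 := by exact_mod_cast hu1
  refine not_two_dvd_choose_two_sub_choose_two_sub hx hm (by rw [hxz, hu1, mul_one]) ?_
  have hM : (2 : ℤ) ∣ M * (t + M ^ y) := (dvd_pow_self 2 (by omega)).mul_right _
  have h2 := dvd_sub ((dvd_pow_self 2 (by omega)).trans hdvd) hM
  rwa [hK, sub_right_comm, add_sub_cancel_right] at h2

theorem not_isSolution_four_pow {e x y z w : ℕ} (he : 0 < e) (hx : Odd x) (hy : Odd y)
    (hz : Odd z) (hs : x + z < 4 ^ e) : ¬ IsSolution (4 ^ e) x y z w := by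
  obtain ⟨m, hm⟩ : ∃ m, 2 * e = m + 1 := ⟨2 * e - 1, by omega⟩
  have hmo : Odd m := ⟨e - 1, by omega⟩
  have h4 : (4 : ℤ) ^ e = 2 ^ (m + 1) := by rw [← hm, pow_mul]; norm_num
  have hs' : x + z < 2 ^ (m + 1) := by rwa [← hm, pow_mul]
  rw [h4]
  obtain ⟨k, rfl⟩ := hy
  rcases k with _ | k
  · exact not_isSolution_of_y_eq_one hmo hx hz hs'
  · exact not_isSolution_of_three_le_y hmo hx hz (by omega) hs'

theorem w_ge_four_e (e x y z w : ℕ) (he : 0 < e)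
    (hx : 0 < x) (hy : 0 < y) (hz : 0 < z) (hw : 0 < w)
    (heq : (4 ^ e - 1) ^ x + 4 ^ (e * y) + (4 ^ e + 1) ^ z = (4 ^ e + 2) ^ w)
    (hne1 : (e, x, y, z, w) ≠ (1, 3, 1, 1, 2))
    (hne2 : (e, x, y, z, w) ≠ (1, 3, 3, 3, 3)) :
    4 * e ≤ w := by
  have hsol : IsSolution (4 ^ e) x y z w := by
    have := congrArg (Nat.cast : ℕ → ℤ) heq
    push_cast [Nat.cast_sub (Nat.one_le_pow e 4 (by norm_num)), pow_mul] at this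
    exact this
  by_contra! hlt
  obtain rfl | he2 : e = 1 ∨ 2 ≤ e := by omega
  · rw [pow_one] at hsol
    rcases hsol.eq_of_w_lt_four hx hy hz hlt with h | h
    exacts [hne1 (by rw [h]), hne2 (by rw [h])]
  have hM : (16 : ℤ) ≤ 4 ^ e :=
    (show (16 : ℤ) = 4 ^ 2 by norm_num) ▸ pow_le_pow_right₀ (by norm_num) he2
  have hw2 := hsol.two_le_w (by linarith) hx.ne' hy.ne' hz.ne'
  have hxo := hsol.odd_x (dvd_pow_self 4 he.ne') hy.ne' hw2
  have hzo := hsol.odd_z (by simpa using (show (4 : ℤ) ≡ 1 [ZMOD 3] by decide).pow e)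
    hx.ne' hw.ne'
  have hyo := hsol.odd_y (by positivity) ((by decide : Even (4 : ℤ)).pow_of_ne_zero he.ne')
    hxo hz.ne'
  obtain ⟨h8x, h8z⟩ := hsol.eight_mul_lt hM
  have h9 := nine_mul_le_four_pow_add_two he2
  exact not_isSolution_four_pow he hxo hyo hzo (by omega) hsol
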